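/- arXiv:2412.15408 — 5 statements merged into one kernel-verified Lean document; each statement's English description precedes it below -/
import Mathlib

section
/- For every natural number n ≥ 1, the centered cardinal B-spline φ_n is of class C^{n−1} on ℝ (i.e. (n−1)-times continuously differentiable; in particular φ_1 is continuous). -/
/-!
Substituting `t = x - y` turns `x ↦ ∫_{-1/2}^{1/2} f (x - y) dy` into `F (x + 1/2) - F (x - 1/2)`,
where `F` is a primitive of `f`. Hence this convolution with `φ_0` is continuous as soon as `f` is
locally integrable, and gains one derivative over `f` when `f` is `C^k`. Starting from the locally
integrable indicator `φ_0`, induction gives `φ_{m+1} ∈ C^m`.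
-/

open MeasureTheory

noncomputable def bspline : ℕ → ℝ → ℝ
  | 0 => Set.indicator (Set.Ioo (-(1/2) : ℝ) (1/2)) (fun _ => 1)
  | n + 1 => fun x => ∫ y in (-(1/2) : ℝ)..(1/2), bspline n (x - y)

section IntegralCompSub

variable {E : Type*} [NormedAddCommGroup E] [NormedSpace ℝ E] {f : ℝ → E}

theorem MeasureTheory.LocallyIntegrable.integral_comp_sub_left_eq_sub_primitive
    (hf : LocallyIntegrable f) (a b x : ℝ) :
    ∫ y in a..b, f (x - y) = (∫ t in (0 : ℝ)..(x - a), f t) - ∫ t in (0 : ℝ)..(x - b), f t := by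
  have hf' : ∀ c d : ℝ, IntervalIntegrable f volume c d := fun _ _ =>
    (hf.integrableOn_isCompact isCompact_uIcc).intervalIntegrable
  rw [intervalIntegral.integral_comp_sub_left,
    intervalIntegral.integral_interval_sub_left (hf' _ _) (hf' _ _)]

theorem MeasureTheory.LocallyIntegrable.continuous_integral_comp_sub_left
    (hf : LocallyIntegrable f) (a b : ℝ) :
    Continuous fun x => ∫ y in a..b, f (x - y) := by
  have hF : Continuous fun u => ∫ t in (0 : ℝ)..u, f t := intervalIntegral.continuous_primitive
    (fun _ _ => (hf.integrableOn_isCompact isCompact_uIcc).intervalIntegrable) 0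
  simp only [hf.integral_comp_sub_left_eq_sub_primitive a b]
  fun_prop

theorem contDiff_succ_primitive [CompleteSpace E] {k : ℕ∞} (hf : ContDiff ℝ k f) (a : ℝ) :
    ContDiff ℝ (k + 1) fun u => ∫ t in a..u, f t := by
  have hderiv : deriv (fun u => ∫ t in a..u, f t) = f :=
    funext (hf.continuous.deriv_integral f a)
  rw [contDiff_succ_iff_deriv, hderiv]
  exact ⟨fun u => (hf.continuous.integral_hasStrictDerivAt a u).hasDerivAt.differentiableAt,
    by simp, hf⟩

theorem contDiff_succ_integral_comp_sub_left [CompleteSpace E] {k : ℕ∞} (hf : ContDiff ℝ k f)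
    (a b : ℝ) :
    ContDiff ℝ (k + 1) fun x => ∫ y in a..b, f (x - y) := by
  have hF := contDiff_succ_primitive hf 0
  simp only [hf.continuous.locallyIntegrable.integral_comp_sub_left_eq_sub_primitive a b]
  exact (hF.comp (contDiff_id.sub contDiff_const)).sub (hF.comp (contDiff_id.sub contDiff_const))

end IntegralCompSub

theorem locallyIntegrable_bspline_zero : LocallyIntegrable (bspline 0) :=
  (locallyIntegrable_const 1).indicator measurableSet_Ioo

theorem contDiff_bspline_succ (m : ℕ) : ContDiff ℝ m (bspline (m + 1)) := by
  induction m with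
  | zero =>
    exact contDiff_zero.mpr (locallyIntegrable_bspline_zero.continuous_integral_comp_sub_left _ _)
  | succ m ih =>
    exact_mod_cast contDiff_succ_integral_comp_sub_left (k := m) ih _ _

/-- For `n ≥ 1`, the centered cardinal B-spline `bspline n` is of class `C^{n-1}` on `ℝ`. -/
theorem bspline_contDiff (n : ℕ) (hn : 1 ≤ n) :
    ContDiff ℝ ((n - 1 : ℕ) : ℕ∞) (bspline n) := by
  obtain ⟨m, rfl⟩ := Nat.exists_eq_add_of_le' hn
  simpa using contDiff_bspline_succ m
end

section
/- For every natural number n ≥ 1, the integer translates of the centered cardinal B-spline form a partition of unity: for every x ∈ ℝ, the sum over all j ∈ ℤ of φ_n(x − j) equals 1 (the sum has only finitely many nonzero terms since φ_n is compactly supported). -/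
open MeasureTheory

/-!
Write `P n x = ∑' j : ℤ, bspline n (x - j)`. Since `bspline n` vanishes outside
`[-(n+1)/2, (n+1)/2]`, only finitely many terms matter uniformly for `y ∈ [-1/2, 1/2]`, so the
sum may be moved under the integral in the recursion:
`P (n+1) x = ∫_{-1/2}^{1/2} P n (x - y) dy`. Now `P 0 = 1` off the half-integers, a null set,
so `P 1 = 1` everywhere, and induction does the rest.
-/

open Set Filter

theorem intervalIntegrable_of_norm_le {E : Type*} [NormedAddCommGroup E] {f : ℝ → E} {C : ℝ}
    (hf : AEStronglyMeasurable f volume) (hC : ∀ x, ‖f x‖ ≤ C) (a b : ℝ) :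
    IntervalIntegrable f volume a b :=
  intervalIntegrable_const.mono_fun' hf.restrict (Eventually.of_forall hC)

theorem Int.mem_Icc_ceil_floor_iff {x r : ℝ} {j : ℤ} :
    j ∈ Finset.Icc ⌈x - r⌉ ⌊x + r⌋ ↔ |x - j| ≤ r := by
  rw [Finset.mem_Icc, Int.ceil_le, Int.le_floor, abs_le]
  constructor <;> rintro ⟨h₁, h₂⟩ <;> constructor <;> linarith

theorem bspline_succ_eq_integral (n : ℕ) (x : ℝ) :
    bspline (n + 1) x = ∫ t in x - 1/2..x + 1/2, bspline n t := by
  simp only [bspline]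
  rw [intervalIntegral.integral_comp_sub_left]
  norm_num

theorem abs_bspline_le_one (n : ℕ) (x : ℝ) : |bspline n x| ≤ 1 := by
  induction n generalizing x with
  | zero => unfold bspline; rw [indicator]; split <;> norm_num
  | succ n ih =>
    calc |bspline (n + 1) x| ≤ 1 * |(1/2 : ℝ) - -(1/2)| :=
          intervalIntegral.norm_integral_le_of_norm_le_const (f := fun y => bspline n (x - y))
            fun y _ => ih (x - y)
      _ = 1 := by norm_num

theorem bspline_eq_zero_of_le_abs {n : ℕ} {x : ℝ} (hx : ((n : ℝ) + 1) / 2 ≤ |x|) :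
    bspline n x = 0 := by
  induction n generalizing x with
  | zero =>
    refine indicator_of_notMem (fun hmem => ?_) _
    have := abs_lt.2 (mem_Ioo.1 hmem)
    norm_num at hx
    linarith
  | succ n ih =>
    rw [bspline, ← intervalIntegral.integral_zero]
    refine intervalIntegral.integral_congr fun y hy => ih ?_
    rw [uIcc_of_le (by norm_num)] at hy
    have := abs_sub_abs_le_abs_sub x y
    have := abs_le.2 hy
    push_cast at hx
    linarith

theorem measurable_bspline (n : ℕ) : Measurable (bspline n) := by
  induction n with
  | zero => exact measurable_const.indicator measurableSet_Ioo
  | succ n ih =>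
    have hint := intervalIntegrable_of_norm_le ih.aestronglyMeasurable (abs_bspline_le_one n)
    have hprim := intervalIntegral.continuous_primitive hint 0
    have hdiff : bspline (n + 1) = fun x =>
        (∫ t in (0 : ℝ)..x + 1/2, bspline n t) - ∫ t in (0 : ℝ)..x - 1/2, bspline n t := by
      ext x
      rw [bspline_succ_eq_integral,
        intervalIntegral.integral_interval_sub_left (hint _ _) (hint _ _)]
    rw [hdiff]
    exact ((hprim.comp (continuous_add_const _)).sub
      (hprim.comp (continuous_sub_right _))).measurable

theorem intervalIntegrable_bspline (n : ℕ) (a b : ℝ) :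
    IntervalIntegrable (bspline n) volume a b :=
  intervalIntegrable_of_norm_le (measurable_bspline n).aestronglyMeasurable
    (abs_bspline_le_one n) a b

theorem tsum_bspline_eq_sum {n : ℕ} {x : ℝ} {s : Finset ℤ}
    (hs : ∀ j ∉ s, ((n : ℝ) + 1) / 2 ≤ |x - j|) :
    ∑' j : ℤ, bspline n (x - j) = ∑ j ∈ s, bspline n (x - j) :=
  tsum_eq_sum fun j hj => bspline_eq_zero_of_le_abs (hs j hj)

theorem tsum_bspline_succ_eq_integral (n : ℕ) (x : ℝ) :
    ∑' j : ℤ, bspline (n + 1) (x - j) =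
      ∫ y in (-(1/2) : ℝ)..(1/2), ∑' j : ℤ, bspline n (x - y - j) := by
  set s := Finset.Icc ⌈x - (n + 2) / 2⌉ ⌊x + (n + 2) / 2⌋
  have hs : ∀ j ∉ s, ((n : ℝ) + 2) / 2 < |x - j| := fun j hj =>
    lt_of_not_ge (mt Int.mem_Icc_ceil_floor_iff.2 hj)
  rw [tsum_bspline_eq_sum (s := s) fun j hj => by push_cast; linarith [hs j hj]]
  calc ∑ j ∈ s, bspline (n + 1) (x - j)
      = ∑ j ∈ s, ∫ y in (-(1/2) : ℝ)..(1/2), bspline n (x - j - y) := rfl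
    _ = ∫ y in (-(1/2) : ℝ)..(1/2), ∑ j ∈ s, bspline n (x - j - y) :=
      (intervalIntegral.integral_finsetSum fun j _ => by
        simpa using
          (intervalIntegrable_bspline n (x - j - -(1/2)) (x - j - 1/2)).comp_sub_left (x - j)).symm
    _ = ∫ y in (-(1/2) : ℝ)..(1/2), ∑' j : ℤ, bspline n (x - y - j) := by
      refine intervalIntegral.integral_congr fun y hy => ?_
      have hy' := abs_le.2 ((uIcc_of_le (by norm_num : (-(1/2) : ℝ) ≤ 1/2)) ▸ hy)
      simp only [sub_right_comm x _ y]
      refine (tsum_bspline_eq_sum fun j hj => ?_).symm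
      have := abs_sub_abs_le_abs_sub (x - j) y
      rw [sub_right_comm] at this
      linarith [hs j hj]

theorem tsum_bspline_succ_eq_one {n : ℕ} (h : ∀ᵐ t, ∑' j : ℤ, bspline n (t - j) = 1)
    (x : ℝ) :
    ∑' j : ℤ, bspline (n + 1) (x - j) = 1 := by
  have hx : ∀ᵐ y, ∑' j : ℤ, bspline n (x - y - j) = 1 :=
    (Measure.measurePreserving_sub_left volume x).quasiMeasurePreserving.ae h
  rw [tsum_bspline_succ_eq_integral,
    intervalIntegral.integral_congr_ae (g := fun _ => 1) (hx.mono fun y hy _ => hy)]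
  norm_num

theorem tsum_bspline_zero_eq_one {t : ℝ} (ht : t ∉ range fun k : ℤ => (k : ℝ) - 1/2) :
    ∑' j : ℤ, bspline 0 (t - j) = 1 := by
  have hmem (j : ℤ) : t - j ∈ Ioo (-(1/2)) (1/2) ↔ j = round t := by
    have hj : t ≠ j - 1/2 := fun h => ht ⟨j, h.symm⟩
    rw [eq_comm, round_eq, Int.floor_eq_iff, mem_Ioo]
    constructor
    · rintro ⟨h₁, h₂⟩
      constructor <;> linarith
    · rintro ⟨h₁, h₂⟩
      exact ⟨lt_of_le_of_ne (by linarith) fun h => hj (by linarith), by linarith⟩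
  have hterm (j : ℤ) : bspline 0 (t - j) = if j = round t then 1 else 0 := by
    simp only [bspline, indicator_apply, hmem]
  rw [tsum_congr hterm, tsum_ite_eq]

theorem ae_tsum_bspline_zero_eq_one : ∀ᵐ t, ∑' j : ℤ, bspline 0 (t - j) = 1 :=
  ((countable_range _).ae_notMem volume).mono fun _ => tsum_bspline_zero_eq_one

/-- For `n ≥ 1`, the integer translates of the centered cardinal B-spline form a
partition of unity. -/
theorem bspline_partition_of_unity (n : ℕ) (hn : 1 ≤ n) :
    ∀ x : ℝ, ∑' j : ℤ, bspline n (x - j) = 1 := by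
  induction n, hn using Nat.le_induction with
  | base => exact tsum_bspline_succ_eq_one ae_tsum_bspline_zero_eq_one
  | succ n _ ih => exact tsum_bspline_succ_eq_one (.of_forall ih)
end

section
/- The centered cardinal B-splines satisfy the convolution semigroup identity: for all natural numbers m and n, φ_m * φ_n = φ_{m+n+1}, where * denotes convolution with respect to Lebesgue measure on ℝ. -/
/-!
Induction on `n`. Convolving with `φ₀` is averaging over a window of width one, so
`φ_m * φ₀ = φ_{m+1}` is the definition after the substitution `t = x - y`. For the inductive
step, `φ_{n+1} = φ_n * φ₀` and Fubini give `φ_m * φ_{n+1} = (φ_m * φ_n) * φ₀ = φ_{m+n+1} * φ₀`;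
the exchange of integrals is justified because every `φ_n` is integrable and bounded by `1`.
-/

open MeasureTheory

lemma integral_mul_indicator_Ioo_sub (f : ℝ → ℝ) (x : ℝ) {a : ℝ} (ha : 0 ≤ a) :
    ∫ y, f y * (Set.Ioo (-a) a).indicator (fun _ => 1) (x - y) = ∫ t in (x - a)..(x + a), f t := by
  have hwindow : (fun y => f y * (Set.Ioo (-a) a).indicator (fun _ => 1) (x - y))
      = (Set.Ioo (x - a) (x + a)).indicator f := by
    funext y
    have hmem : x - y ∈ Set.Ioo (-a) a ↔ y ∈ Set.Ioo (x - a) (x + a) := by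
      simp only [Set.mem_Ioo]
      constructor <;> rintro ⟨h₁, h₂⟩ <;> constructor <;> linarith
    by_cases hy : y ∈ Set.Ioo (x - a) (x + a)
    · rw [Set.indicator_of_mem hy, Set.indicator_of_mem (hmem.mpr hy), mul_one]
    · rw [Set.indicator_of_notMem hy, Set.indicator_of_notMem (mt hmem.mp hy), mul_zero]
  rw [hwindow, integral_indicator measurableSet_Ioo, ← integral_Ioc_eq_integral_Ioo,
    intervalIntegral.integral_of_le (by linarith)]

lemma integral_mul_intervalIntegral_sub_comm {f g : ℝ → ℝ} {a b C : ℝ} (hab : a ≤ b)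
    (hf : Integrable f) (hg : Measurable g) (hgC : ∀ t, |g t| ≤ C) (x : ℝ) :
    ∫ y, f y * ∫ t in a..b, g (x - y - t) = ∫ t in a..b, ∫ y, f y * g (x - t - y) := by
  have hint : Integrable (fun z : ℝ × ℝ => f z.1 * g (x - z.1 - z.2))
      (volume.prod (volume.restrict (Set.Ioc a b))) := by
    refine Integrable.mono' (hf.norm.mul_prod (integrable_const C)) ?_ ?_
    · exact hf.aestronglyMeasurable.comp_fst.mul (hg.comp (by fun_prop)).aestronglyMeasurable
    · filter_upwards with z
      rw [norm_mul, Real.norm_eq_abs (g _)]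
      exact mul_le_mul_of_nonneg_left (hgC _) (norm_nonneg _)
  simp only [intervalIntegral.integral_of_le hab, ← integral_const_mul]
  rw [integral_integral_swap hint]
  simp only [sub_right_comm x]

namespace bspline

lemma succ_apply (n : ℕ) (x : ℝ) :
    bspline (n + 1) x = ∫ y in (-(1/2) : ℝ)..(1/2), bspline n (x - y) := rfl

lemma succ_eq_intervalIntegral (n : ℕ) (x : ℝ) :
    bspline (n + 1) x = ∫ t in (x - 1/2)..(x + 1/2), bspline n t := by
  rw [succ_apply, intervalIntegral.integral_comp_sub_left (bspline n) x]
  norm_num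

lemma nonneg (n : ℕ) (x : ℝ) : 0 ≤ bspline n x := by
  induction n generalizing x with
  | zero => exact Set.indicator_nonneg (fun _ _ => zero_le_one) x
  | succ n ih => exact intervalIntegral.integral_nonneg (by norm_num) fun _ _ => ih _

lemma eq_zero_of_le_abs {n : ℕ} {x : ℝ} (hx : ((n : ℝ) + 1) / 2 ≤ |x|) : bspline n x = 0 := by
  induction n generalizing x with
  | zero =>
    refine Set.indicator_of_notMem (fun h => ?_) _
    rw [Set.mem_Ioo] at h
    norm_num at hx
    cases abs_cases x <;> linarith [h.1, h.2]
  | succ n ih =>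
    rw [succ_apply, intervalIntegral.integral_congr (g := fun _ => 0), intervalIntegral.integral_zero]
    intro y hy
    rw [Set.uIcc_of_le (by norm_num), Set.mem_Icc] at hy
    apply ih
    push_cast at hx
    linarith [abs_sub_abs_le_abs_sub x y, abs_le.mpr hy]

lemma continuous_succ {n : ℕ} (h : Integrable (bspline n)) : Continuous (bspline (n + 1)) := by
  have hprimitive : Continuous fun u : ℝ => ∫ t in (0 : ℝ)..u, bspline n t :=
    intervalIntegral.continuous_primitive (fun _ _ => h.intervalIntegrable) 0
  have hdiff : bspline (n + 1) = fun x =>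
      (∫ t in (0 : ℝ)..(x + 1/2), bspline n t) - ∫ t in (0 : ℝ)..(x - 1/2), bspline n t := by
    funext x
    rw [succ_eq_intervalIntegral, intervalIntegral.integral_interval_sub_left
      h.intervalIntegrable h.intervalIntegrable]
  rw [hdiff]
  fun_prop

lemma hasCompactSupport (n : ℕ) : HasCompactSupport (bspline n) := by
  refine HasCompactSupport.intro (isCompact_Icc (a := -(((n : ℝ) + 1) / 2)) (b := ((n : ℝ) + 1) / 2))
    fun x hx => eq_zero_of_le_abs ?_
  rw [Set.mem_Icc, not_and_or, not_le, not_le] at hx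
  have hn : (0 : ℝ) ≤ n := n.cast_nonneg
  rcases hx with h | h
  · rw [abs_of_neg (by linarith)]
    linarith
  · rw [abs_of_pos (by linarith)]
    linarith

lemma integrable (n : ℕ) : Integrable (bspline n) := by
  induction n with
  | zero =>
    exact (integrable_indicator_iff measurableSet_Ioo).mpr
      (integrableOn_const (by simp))
  | succ n ih => exact (continuous_succ ih).integrable_of_hasCompactSupport (hasCompactSupport _)

lemma measurable (n : ℕ) : Measurable (bspline n) := by
  cases n with
  | zero => exact measurable_const.indicator measurableSet_Ioo
  | succ n => exact (continuous_succ (integrable n)).measurable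

lemma le_one (n : ℕ) (x : ℝ) : bspline n x ≤ 1 := by
  cases n with
  | zero => exact Set.indicator_le_self' (fun _ _ => zero_le_one) x
  | succ n =>
    calc bspline (n + 1) x = ∫ t in (x - 1/2)..(x + 1/2), bspline n t := succ_eq_intervalIntegral n x
      _ ≤ ∫ _ in (x - 1/2)..(x + 1/2), (1 : ℝ) :=
          intervalIntegral.integral_mono_on (by linarith) (integrable n).intervalIntegrable
            intervalIntegrable_const fun t _ => le_one n t
      _ = 1 := by norm_num

lemma integral_mul_zero (f : ℝ → ℝ) (x : ℝ) :
    ∫ y, f y * bspline 0 (x - y) = ∫ t in (x - 1/2)..(x + 1/2), f t :=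
  integral_mul_indicator_Ioo_sub f x (by norm_num)

lemma integral_mul_succ {f : ℝ → ℝ} (hf : Integrable f) (n : ℕ) (x : ℝ) :
    ∫ y, f y * bspline (n + 1) (x - y)
      = ∫ t in (-(1/2) : ℝ)..(1/2), ∫ y, f y * bspline n (x - t - y) :=
  integral_mul_intervalIntegral_sub_comm (by norm_num) hf (measurable n)
    (fun t => (abs_of_nonneg (nonneg n t)).trans_le (le_one n t)) x

end bspline

/-- Convolution semigroup identity for the centered cardinal B-splines:
`φ_m * φ_n = φ_{m+n+1}` with respect to Lebesgue measure. -/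
theorem bspline_convolution (m n : ℕ) :
    ∀ x : ℝ, (∫ y : ℝ, bspline m y * bspline n (x - y)) = bspline (m + n + 1) x := by
  induction n with
  | zero =>
    intro x
    rw [bspline.integral_mul_zero, bspline.succ_eq_intervalIntegral]
  | succ n ih =>
    intro x
    rw [bspline.integral_mul_succ (bspline.integrable m)]
    simp only [ih]
    exact (bspline.succ_apply (m + n + 1) x).symm
end

section
/- Second-order interpolation accuracy of B-spline regularized delta functions: let n ∈ ℕ, let g : ℝ → ℝ be twice continuously differentiable with |g″(x)| ≤ M for all x ∈ ℝ, and let h > 0. Then for every y ∈ ℝ, |g(y) − ∫_ℝ (1/h) φ_n((x − y)/h) g(x) dx| ≤ (M/2) h² ∫_ℝ z² φ_n(z) dz; in particular the interpolation error is O(h²). -/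
/-!
Substituting `x = y + h z` turns the interpolant into `∫ φₙ(z) g(y + h z) dz`. The B-spline
`φₙ` is a nonnegative even probability density with compact support, so against it the
constant Taylor term of `g` at `y` reproduces `g y`, the linear term integrates to zero, and the
remainder, bounded by `M (h z)² / 2`, contributes at most `(M/2) h² ∫ z² φₙ(z) dz`.
-/

open MeasureTheory

open Set
open scoped Convolution

-- `taylor_mean_remainder_bound` only gives `C s²`; fencing by `C t² / 2` keeps the sharp constant.
theorem norm_le_half_mul_sq_of_norm_deriv_le_mul_abs {E : Type*} [NormedAddCommGroup E]
    [NormedSpace ℝ E] {f f' : ℝ → E} {C : ℝ} (hf : ∀ t, HasDerivAt f (f' t) t) (hf0 : f 0 = 0)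
    (bound : ∀ t, ‖f' t‖ ≤ C * |t|) (s : ℝ) : ‖f s‖ ≤ C / 2 * s ^ 2 := by
  have of_nonneg : ∀ {f f' : ℝ → E}, (∀ t, HasDerivAt f (f' t) t) → f 0 = 0 →
      (∀ t, ‖f' t‖ ≤ C * |t|) → ∀ s, 0 ≤ s → ‖f s‖ ≤ C / 2 * s ^ 2 := by
    intro f f' hf hf0 bound s hs
    have hB (t : ℝ) : HasDerivAt (fun t => C / 2 * t ^ 2) (C * t) t :=
      ((hasDerivAt_pow 2 t).const_mul (C / 2)).congr_deriv (by ring)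
    refine image_norm_le_of_norm_deriv_right_le_deriv_boundary
      (fun t _ => (hf t).continuousAt.continuousWithinAt) (fun t _ => (hf t).hasDerivWithinAt)
      (by simp [hf0]) hB (fun t ht => ?_) ⟨hs, le_rfl⟩
    simpa [abs_of_nonneg ht.1] using bound t
  rcases le_total 0 s with hs | hs
  · exact of_nonneg hf hf0 bound s hs
  · have hf_neg (t : ℝ) : HasDerivAt (fun t => f (-t)) (-f' (-t)) t := by
      simpa [Function.comp_def] using (hf (-t)).scomp t (hasDerivAt_neg t)
    simpa using of_nonneg hf_neg (by simpa using hf0) (fun t => by simpa using bound (-t)) (-s)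
      (neg_nonneg.mpr hs)

theorem abs_sub_sub_deriv_mul_le {g : ℝ → ℝ} {M : ℝ} (hg : ContDiff ℝ 2 g)
    (hM : ∀ x, |deriv (deriv g) x| ≤ M) (a s : ℝ) :
    |g (a + s) - g a - deriv g a * s| ≤ M / 2 * s ^ 2 := by
  have hg' : ContDiff ℝ 1 (deriv g) := hg.iterate_deriv' 1 1
  have lipschitz (u v : ℝ) : |deriv g u - deriv g v| ≤ M * |u - v| :=
    Convex.norm_image_sub_le_of_norm_deriv_le
      (fun x _ => (hg'.differentiable one_ne_zero).differentiableAt) (fun x _ => hM x)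
      convex_univ (mem_univ v) (mem_univ u)
  refine norm_le_half_mul_sq_of_norm_deriv_le_mul_abs
    (f := fun t => g (a + t) - g a - deriv g a * t) (f' := fun t => deriv g (a + t) - deriv g a)
    (fun t => ?_) (by simp) (fun t => by simpa using lipschitz (a + t) a) s
  have hd : HasDerivAt (fun t => g (a + t)) (deriv g (a + t)) t :=
    ((hg.differentiable two_ne_zero).differentiableAt.hasDerivAt).comp_const_add a t
  simpa using (hd.sub_const (g a)).fun_sub ((hasDerivAt_id t).const_mul (deriv g a))

theorem integral_id_mul_eq_zero_of_even {φ : ℝ → ℝ} (hφ : ∀ z, φ (-z) = φ z) :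
    ∫ z, z * φ z = 0 := by
  have h := integral_neg_eq_self (fun z => z * φ z) volume
  simp only [hφ, neg_mul, integral_neg] at h
  linarith

theorem MeasureTheory.Integrable.id_mul_of_sq_mul {φ : ℝ → ℝ} (hφ : Integrable φ)
    (hφ2 : Integrable fun z => z ^ 2 * φ z) : Integrable fun z => z * φ z := by
  refine (hφ.norm.add hφ2.norm).mono' (aestronglyMeasurable_id.mul hφ.1)
    (Filter.Eventually.of_forall fun z => ?_)
  have : |z| ≤ 1 + z ^ 2 := by nlinarith [abs_nonneg z, sq_abs z, sq_nonneg (|z| - 1)]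
  simp only [norm_mul, norm_pow, Real.norm_eq_abs, Pi.add_apply, sq_abs]
  nlinarith [abs_nonneg (φ z)]

theorem integral_div_mul_comp_div_sub (φ f : ℝ → ℝ) {h : ℝ} (hh : 0 < h) (y : ℝ) :
    ∫ x, 1 / h * φ ((x - y) / h) * f x = ∫ z, φ z * f (y + h * z) := by
  calc ∫ x, 1 / h * φ ((x - y) / h) * f x = ∫ u, 1 / h * (φ (u / h) * f (y + u)) := by
        rw [← integral_add_right_eq_self _ y]
        simp only [add_sub_cancel_right, add_comm y, mul_assoc]
    _ = ∫ z, φ (h * z / h) * f (y + h * z) := by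
        rw [integral_const_mul, Measure.integral_comp_mul_left (fun u => φ (u / h) * f (y + u)) h,
          abs_of_pos (inv_pos.mpr hh), smul_eq_mul, one_div]
    _ = ∫ z, φ z * f (y + h * z) := by simp only [mul_div_cancel_left₀ _ hh.ne']

theorem abs_sub_integral_mul_comp_le {φ g : ℝ → ℝ} {M : ℝ} (hφ_nonneg : ∀ z, 0 ≤ φ z)
    (hφ_even : ∀ z, φ (-z) = φ z) (hφ_int : Integrable φ) (hφ_one : ∫ z, φ z = 1)
    (hφ_moment : Integrable fun z => z ^ 2 * φ z) (hg : ContDiff ℝ 2 g)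
    (hM : ∀ x, |deriv (deriv g) x| ≤ M) (y h : ℝ) :
    |g y - ∫ z, φ z * g (y + h * z)| ≤ M / 2 * h ^ 2 * ∫ z, z ^ 2 * φ z := by
  set r : ℝ → ℝ := fun z => g (y + h * z) - g y - deriv g y * (h * z)
  have hr_bound (z : ℝ) : ‖φ z * r z‖ ≤ M / 2 * h ^ 2 * (z ^ 2 * φ z) := by
    rw [norm_mul, Real.norm_of_nonneg (hφ_nonneg z), Real.norm_eq_abs]
    calc φ z * |r z| ≤ φ z * (M / 2 * (h * z) ^ 2) :=
          mul_le_mul_of_nonneg_left (abs_sub_sub_deriv_mul_le hg hM y (h * z)) (hφ_nonneg z)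
      _ = M / 2 * h ^ 2 * (z ^ 2 * φ z) := by ring
  have hr_cont : Continuous r := by
    have := hg.continuous
    fun_prop
  have hr_int : Integrable fun z => φ z * r z :=
    (hφ_moment.const_mul _).mono' (hφ_int.1.mul hr_cont.aestronglyMeasurable)
      (Filter.Eventually.of_forall hr_bound)
  have hzφ_int := hφ_int.id_mul_of_sq_mul hφ_moment
  have hsplit : ∫ z, φ z * g (y + h * z)
      = g y * (∫ z, φ z) + deriv g y * h * (∫ z, z * φ z) + ∫ z, φ z * r z := by
    rw [← integral_const_mul, ← integral_const_mul, ← integral_add (hφ_int.const_mul _)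
      (hzφ_int.const_mul _), ← integral_add ((hφ_int.const_mul _).fun_add (hzφ_int.const_mul _))
      hr_int]
    congr 1 with z
    ring
  rw [hsplit, hφ_one, integral_id_mul_eq_zero_of_even hφ_even, ← integral_const_mul]
  calc |g y - (g y * 1 + deriv g y * h * 0 + ∫ z, φ z * r z)| = ‖∫ z, φ z * r z‖ := by
        rw [Real.norm_eq_abs, ← abs_neg]
        congr 1
        ring
    _ ≤ ∫ z, M / 2 * h ^ 2 * (z ^ 2 * φ z) :=
        norm_integral_le_of_norm_le (hφ_moment.const_mul _) (Filter.Eventually.of_forall hr_bound)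

theorem bspline_nonneg : ∀ (n : ℕ) (x : ℝ), 0 ≤ bspline n x
  | 0, x => indicator_nonneg (fun _ _ => zero_le_one) x
  | n + 1, _ => intervalIntegral.integral_nonneg (by norm_num) fun _ _ => bspline_nonneg n _

theorem bspline_neg : ∀ (n : ℕ) (x : ℝ), bspline n (-x) = bspline n x
  | 0, x => by simp only [bspline, indicator_apply, mem_Ioo, neg_lt, neg_neg, and_comm]
  | n + 1, x => by
    simp only [bspline, ← neg_add', bspline_neg n]
    simpa [sub_eq_add_neg] using
      intervalIntegral.integral_comp_neg (a := -(1/2)) (b := 1/2) fun y => bspline n (x - y)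

theorem bspline_eq_zero_of_le_abs_s9 : ∀ (n : ℕ) {x : ℝ}, (n + 1 : ℝ) / 2 ≤ |x| → bspline n x = 0
  | 0, x, hx => by
    refine indicator_of_notMem (fun hmem => ?_) _
    have : |x| < 1 / 2 := abs_lt.mpr ⟨by linarith [hmem.1], hmem.2⟩
    norm_num at hx
    linarith
  | n + 1, x, hx => by
    calc bspline (n + 1) x = ∫ _ in (-(1/2) : ℝ)..(1/2), (0 : ℝ) :=
          intervalIntegral.integral_congr fun y hy => ?_
      _ = 0 := by simp
    rw [uIcc_of_le (by norm_num)] at hy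
    refine bspline_eq_zero_of_le_abs_s9 n ?_
    have := abs_sub_abs_le_abs_sub x y
    have := abs_le.mpr hy
    push_cast at hx
    linarith

theorem bspline_succ_eq_convolution (n : ℕ) : bspline (n + 1) = bspline 0 ⋆ bspline n := by
  ext x
  show ∫ y in (-(1/2) : ℝ)..(1/2), bspline n (x - y) = _
  rw [intervalIntegral.integral_of_le (by norm_num), integral_Ioc_eq_integral_Ioo,
    ← integral_indicator measurableSet_Ioo, convolution_def]
  congr 1 with t
  simp only [bspline, ContinuousLinearMap.lsmul_apply, smul_eq_mul, indicator_apply]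
  split_ifs <;> simp

theorem integrable_bspline_zero : Integrable (bspline 0) :=
  (integrableOn_const measure_Ioo_lt_top.ne).integrable_indicator measurableSet_Ioo

theorem integral_bspline_zero : ∫ x, bspline 0 x = 1 := by
  norm_num [bspline, integral_indicator measurableSet_Ioo]

theorem integrable_bspline : ∀ n, Integrable (bspline n)
  | 0 => integrable_bspline_zero
  | n + 1 => by
    rw [bspline_succ_eq_convolution]
    exact integrable_bspline_zero.integrable_convolution _ (integrable_bspline n)

theorem integral_bspline : ∀ n, ∫ x, bspline n x = 1
  | 0 => integral_bspline_zero
  | n + 1 => by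
    rw [bspline_succ_eq_convolution, integral_convolution _ integrable_bspline_zero
      (integrable_bspline n), integral_bspline_zero, integral_bspline n]
    simp

theorem integrable_pow_mul_bspline (k n : ℕ) : Integrable fun x => x ^ k * bspline n x := by
  refine ((integrable_bspline n).const_mul (((n + 1 : ℝ) / 2) ^ k)).mono'
    ((continuous_pow k).aestronglyMeasurable.mul (integrable_bspline n).1)
    (Filter.Eventually.of_forall fun x => ?_)
  rw [norm_mul, norm_pow, Real.norm_eq_abs, Real.norm_of_nonneg (bspline_nonneg n x)]
  rcases le_or_gt ((n + 1 : ℝ) / 2) |x| with hx | hx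
  · simp [bspline_eq_zero_of_le_abs_s9 n hx]
  · exact mul_le_mul_of_nonneg_right (pow_le_pow_left₀ (abs_nonneg x) hx.le k)
      (bspline_nonneg n x)

/-- Second-order interpolation accuracy of the B-spline regularized delta function
`δ_h(x) = (1/h) φ_n(x/h)`: for a `C²` function `g` with second derivative bounded by `M`,
the interpolation error at every point `y` is at most `(M/2) h² ∫ z² φ_n(z) dz`. -/
theorem bspline_interpolation_second_order (n : ℕ) (g : ℝ → ℝ) (M : ℝ)
    (hg : ContDiff ℝ 2 g) (hM : ∀ x : ℝ, |deriv (deriv g) x| ≤ M)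
    (h : ℝ) (hh : 0 < h) :
    ∀ y : ℝ,
      |g y - ∫ x : ℝ, (1 / h) * bspline n ((x - y) / h) * g x| ≤
        M / 2 * h ^ 2 * ∫ z : ℝ, z ^ 2 * bspline n z := by
  intro y
  rw [integral_div_mul_comp_div_sub _ _ hh]
  exact abs_sub_integral_mul_comp_le (bspline_nonneg n) (bspline_neg n) (integrable_bspline n)
    (integral_bspline n) (integrable_pow_mul_bspline 2 n) hg hM y h
end

section
/- The derivative of a B-spline interpolant equals the lower-order B-spline interpolant of the backward differences: let n ≥ 1 be a natural number, h > 0, and let c : ℤ → ℝ be finitely supported. Then the function F(x) = Σ_{i∈ℤ} c_i φ_{n+1}(x/h − i) is differentiable at every x ∈ ℝ, with F′(x) = (1/h) Σ_{i∈ℤ} (c_i − c_{i−1}) φ_n(x/h − i + 1/2). -/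
open MeasureTheory

/-!
Since `φ_{n+1}(x) = ∫_{x-1/2}^{x+1/2} φ_n`, the fundamental theorem of calculus gives
`φ_{n+1}' = φ_n(· + 1/2) - φ_n(· - 1/2)` as soon as `φ_n` is continuous, i.e. for `n ≥ 1`.
Differentiating the finite sum termwise and shifting the index in the `φ_n(· - 1/2)` half
(summation by parts) turns the coefficients into backward differences.
-/

section MovingIntegral

variable {E : Type*} [NormedAddCommGroup E] [NormedSpace ℝ E] {g : ℝ → E}

theorem integral_window_eq_sub_primitive (hg : ∀ a b, IntervalIntegrable g volume a b)
    (r x : ℝ) :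
    ∫ t in (x - r)..(x + r), g t = (∫ t in 0..(x + r), g t) - ∫ t in 0..(x - r), g t :=
  (intervalIntegral.integral_interval_sub_left (hg _ _) (hg _ _)).symm

theorem continuous_integral_window (hg : ∀ a b, IntervalIntegrable g volume a b) (r : ℝ) :
    Continuous fun x => ∫ t in (x - r)..(x + r), g t := by
  simp_rw [integral_window_eq_sub_primitive hg]
  have hG := intervalIntegral.continuous_primitive hg 0
  fun_prop

theorem hasDerivAt_integral_window [CompleteSpace E] (hg : Continuous g) (r x : ℝ) :
    HasDerivAt (fun y => ∫ t in (y - r)..(y + r), g t) (g (x + r) - g (x - r)) x := by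
  simp_rw [integral_window_eq_sub_primitive (fun _ _ => hg.intervalIntegrable _ _)]
  have hG (u : ℝ) : HasDerivAt (fun u => ∫ t in 0..u, g t) (g u) u :=
    (hg.integral_hasStrictDerivAt 0 u).hasDerivAt
  exact ((hG _).comp_add_const x r).sub ((hG _).comp_sub_const x r)

end MovingIntegral

theorem bspline_succ_apply (n : ℕ) (x : ℝ) :
    bspline (n + 1) x = ∫ t in (x - 1/2)..(x + 1/2), bspline n t := by
  simp only [bspline, intervalIntegral.integral_comp_sub_left (bspline n) x]
  ring_nf

theorem continuous_bspline_succ (n : ℕ) : Continuous (bspline (n + 1)) := by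
  have hint : ∀ a b, IntervalIntegrable (bspline n) volume a b := by
    cases n with
    | zero =>
      intro a b
      exact (intervalIntegrable_const (c := (1 : ℝ))).mono_fun
        (measurable_const.indicator measurableSet_Ioo).aestronglyMeasurable
        (Filter.Eventually.of_forall fun t => norm_indicator_le_norm_self _ t)
    | succ n => exact (continuous_bspline_succ n).intervalIntegrable
  simpa only [← funext (bspline_succ_apply n)] using continuous_integral_window hint (1/2)

theorem hasDerivAt_bspline_succ (n : ℕ) (hn : 1 ≤ n) (x : ℝ) :
    HasDerivAt (bspline (n + 1)) (bspline n (x + 1/2) - bspline n (x - 1/2)) x := by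
  obtain ⟨m, rfl⟩ := Nat.exists_eq_add_of_le' hn
  rw [funext (bspline_succ_apply (m + 1))]
  exact hasDerivAt_integral_window (continuous_bspline_succ m) (1/2) x

theorem hasDerivAt_tsum_mul_of_finite_support {ι : Type*} {c : ι → ℝ}
    (hc : (Function.support c).Finite) {f : ι → ℝ → ℝ} {f' : ι → ℝ} {x : ℝ}
    (hf : ∀ i, HasDerivAt (f i) (f' i) x) :
    HasDerivAt (fun y => ∑' i, c i * f i y) (∑' i, c i * f' i) x := by
  have hzero {a : ι → ℝ} (i : ι) (hi : i ∉ hc.toFinset) : c i * a i = 0 := by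
    simp_all
  simp_rw [tsum_eq_sum (s := hc.toFinset) (hzero (a := fun i => f i _)),
    tsum_eq_sum (s := hc.toFinset) (hzero (a := f'))]
  exact HasDerivAt.fun_sum fun i _ => (hf i).const_mul (c i)

theorem tsum_sub_pred_mul_eq_tsum_mul_sub_succ {c : ℤ → ℝ} (hc : (Function.support c).Finite)
    (a : ℤ → ℝ) :
    ∑' i, (c i - c (i - 1)) * a i = ∑' i, c i * (a i - a (i + 1)) := by
  have hsummable (b : ℤ → ℝ) : Summable fun i => c i * b i :=
    summable_of_hasFiniteSupport (Function.HasFiniteSupport.fun_mul_left hc b)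
  have hshift : ∑' i, c (i - 1) * a i = ∑' i, c i * a (i + 1) := by
    simpa using ((Equiv.addRight (1 : ℤ)).tsum_eq fun i => c (i - 1) * a i).symm
  have hshift_summable : Summable fun i => c (i - 1) * a i := by
    simpa [Function.comp_def] using
      (Equiv.subRight (1 : ℤ)).summable_iff.mpr (hsummable fun i => a (i + 1))
  simp only [sub_mul, mul_sub]
  rw [(hsummable a).tsum_sub hshift_summable, (hsummable a).tsum_sub (hsummable _), hshift]

theorem bspline_interpolant_deriv_general (n : ℕ) (hn : 1 ≤ n) (h : ℝ)
    (c : ℤ → ℝ) (hc : (Function.support c).Finite) :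
    ∀ x : ℝ,
      HasDerivAt (fun x : ℝ => ∑' i : ℤ, c i * bspline (n + 1) (x / h - i))
        ((1 / h) * ∑' i : ℤ, (c i - c (i - 1)) * bspline n (x / h - i + 1/2)) x := by
  intro x
  have hterm (i : ℤ) : HasDerivAt (fun y => bspline (n + 1) (y / h - i))
      ((bspline n (x / h - i + 1/2) - bspline n (x / h - i - 1/2)) * (1 / h)) x := by
    have hinner : HasDerivAt (fun y => y / h - i) (1 / h) x := by
      simpa using ((hasDerivAt_id x).div_const h).sub_const (i : ℝ)
    exact (hasDerivAt_bspline_succ n hn _).comp x hinner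
  convert hasDerivAt_tsum_mul_of_finite_support hc hterm using 1
  rw [tsum_sub_pred_mul_eq_tsum_mul_sub_succ hc, ← tsum_mul_left]
  congr 1 with i
  push_cast
  rw [show x / h - (i + 1) + 1 / 2 = x / h - i - 1 / 2 by ring]
  ring

/-- The derivative of a B-spline interpolant equals the lower-order B-spline interpolant
of the backward differences of the data. -/
theorem bspline_interpolant_deriv (n : ℕ) (hn : 1 ≤ n) (h : ℝ) (hh : 0 < h)
    (c : ℤ → ℝ) (hc : (Function.support c).Finite) :
    ∀ x : ℝ,
      HasDerivAt (fun x : ℝ => ∑' i : ℤ, c i * bspline (n + 1) (x / h - i))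
        ((1 / h) * ∑' i : ℤ, (c i - c (i - 1)) * bspline n (x / h - i + 1/2)) x :=
  bspline_interpolant_deriv_general n hn h c hc
end
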